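/- Let F₁, F₂ be cdf's with finite means. Then second order stochastic dominance, ∫_{-∞}^{x} F₁(t) dt ≥ ∫_{-∞}^{x} F₂(t) dt for all x ∈ ℝ, holds if and only if the weak Lorenz ordering holds: ∫_{0}^{p} F₁⁻¹(α) dα ≤ ∫_{0}^{p} F₂⁻¹(α) dα for all p ∈ [0,1]. -/

import Mathlib

open MeasureTheory Set Filter Topology Function

noncomputable section

/-- A cumulative distribution function: non-decreasing, right-continuous,
with limit 0 at -∞ and limit 1 at +∞. -/
structure IsCDF (F : ℝ → ℝ) : Prop where
  mono : Monotone F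
  right_cont : ∀ x, ContinuousWithinAt F (Ici x) x
  tendsto_atBot : Tendsto F atBot (𝓝 0)
  tendsto_atTop : Tendsto F atTop (𝓝 1)

/-- The quantile function `F⁻¹ (α) = inf {x | F x ≥ α}`. -/
def qf (F : ℝ → ℝ) (α : ℝ) : ℝ := sInf {x | α ≤ F x}

/-- `(u₀, v₀)` is a standard pair: `u₀ : ℝ → ℝ` non-decreasing left-continuous,
`v₀ : [0,1] → [0,1]` non-decreasing right-continuous with `v₀ 0 = 0` and `v₀ (1⁻) = 1`. -/
structure StandardPair (u₀ v₀ : ℝ → ℝ) : Prop where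
  u_mono : Monotone u₀
  u_left_cont : ∀ x, ContinuousWithinAt u₀ (Iic x) x
  v_mono : MonotoneOn v₀ (Icc 0 1)
  v_right_cont : ∀ α ∈ Ico (0:ℝ) 1, Tendsto v₀ (𝓝[>] α) (𝓝 (v₀ α))
  v_mem : ∀ α ∈ Icc (0:ℝ) 1, v₀ α ∈ Icc (0:ℝ) 1
  v_zero : v₀ 0 = 0
  v_one : Tendsto v₀ (𝓝[<] (1:ℝ)) (𝓝 1)

/-- `μ` is the Lebesgue–Stieltjes measure of the left-continuous integrator `g` on `ℝ`:
`μ [a,b) = g b - g a`. -/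
def IsLSL (g : ℝ → ℝ) (μ : Measure ℝ) : Prop :=
  ∀ a b : ℝ, a ≤ b → μ (Ico a b) = ENNReal.ofReal (g b - g a)

/-- `μ` is the Lebesgue–Stieltjes measure of the right-continuous integrator `g` on `ℝ`:
`μ (a,b] = g b - g a`. -/
def IsLSR (g : ℝ → ℝ) (μ : Measure ℝ) : Prop :=
  ∀ a b : ℝ, a ≤ b → μ (Ioc a b) = ENNReal.ofReal (g b - g a)

/-- `μ` behaves on `[0,1]` as the Lebesgue–Stieltjes measure of the right-continuous
integrator `g`: `μ (a,b] = g b - g a` for `0 ≤ a ≤ b ≤ 1`. -/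
def IsLSR01 (g : ℝ → ℝ) (μ : Measure ℝ) : Prop :=
  ∀ a b : ℝ, 0 ≤ a → a ≤ b → b ≤ 1 → μ (Ioc a b) = ENNReal.ofReal (g b - g a)

/-- `μ` behaves inside `(0,1)` as the Lebesgue–Stieltjes measure of the left-continuous
integrator `g`: `μ [a,b) = g b - g a` for `0 < a ≤ b < 1`. -/
def IsLSL01 (g : ℝ → ℝ) (μ : Measure ℝ) : Prop :=
  ∀ a b : ℝ, 0 < a → a ≤ b → b < 1 → μ (Ico a b) = ENNReal.ofReal (g b - g a)

/-- `u` has density `k` with respect to the Stieltjes measure `μ₀` of `u₀`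
(left-continuous convention `[a,b)`), i.e. `du = k du₀`:
`u b - u a = ∫_{[a,b)} k dμ₀` for all `a ≤ b`. -/
def HasDensity (u k : ℝ → ℝ) (μ₀ : Measure ℝ) : Prop :=
  ∀ a b : ℝ, a ≤ b → u b - u a = ∫ s in Ico a b, k s ∂μ₀

/-- The upper `(u₀,v₀)`-ordering `F₁ ≺^{(u₀,v₀)} F₂`:
`∫ v₀(F₁) du ≥ ∫ v₀(F₂) du` for every non-decreasing `u₀`-concave `u`, where such a `u`
is encoded through its Radon–Nikodym density `k = du/du₀` (bounded, non-negative,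
non-increasing), so that `du = k dμ₀`.  Here `μ₀` is the Stieltjes measure of `u₀`. -/
def UpperOrder (v₀ F₁ F₂ : ℝ → ℝ) (μ₀ : Measure ℝ) : Prop :=
  ∀ k : ℝ → ℝ, Antitone k → (∀ x, 0 ≤ k x) → (∃ C, ∀ x, k x ≤ C) →
    ∫⁻ x, ENNReal.ofReal (v₀ (F₂ x)) ∂(μ₀.withDensity fun x => ENNReal.ofReal (k x)) ≤
      ∫⁻ x, ENNReal.ofReal (v₀ (F₁ x)) ∂(μ₀.withDensity fun x => ENNReal.ofReal (k x))

/-- The lower `(u₀,v₀)`-ordering `F₁ ≺_{(u₀,v₀)} F₂`: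
`-∫ (1 - v₀(F₁)) du ≥ -∫ (1 - v₀(F₂)) du` for every non-decreasing `u₀`-convex `u`,
encoded through its density `m = du/du₀` (non-negative, non-decreasing). -/
def LowerOrder (v₀ F₁ F₂ : ℝ → ℝ) (μ₀ : Measure ℝ) : Prop :=
  ∀ m : ℝ → ℝ, Monotone m → (∀ x, 0 ≤ m x) →
    ∫⁻ x, ENNReal.ofReal (1 - v₀ (F₁ x)) ∂(μ₀.withDensity fun x => ENNReal.ofReal (m x)) ≤
      ∫⁻ x, ENNReal.ofReal (1 - v₀ (F₂ x)) ∂(μ₀.withDensity fun x => ENNReal.ofReal (m x))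

/-- Condition (a): `∫_ℝ |u₀(x)| dv₀(F(x)) < ∞`, where `ν` is the Stieltjes measure
of `v₀ ∘ F`. -/
def CondA (u₀ : ℝ → ℝ) (ν : Measure ℝ) : Prop :=
  ∫⁻ x, ENNReal.ofReal |u₀ x| ∂ν < ⊤

/-- Condition (b): `∫_{[0,p)} v₀(α) du₀(F⁻¹(α)) < ∞` for all `p < 1`, where `lam` is the
Stieltjes measure of `u₀ ∘ F⁻¹` on `(0,1)`. -/
def CondB (v₀ : ℝ → ℝ) (lam : Measure ℝ) : Prop :=
  ∀ p : ℝ, p < 1 → ∫⁻ α in Ioo 0 p, ENNReal.ofReal (v₀ α) ∂lam < ⊤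

/-- Condition (b)': `∫_ℝ (1 - v₀(F(x))) du₀(x) < ∞`, where `μ₀` is the Stieltjes
measure of `u₀`. -/
def CondB' (v₀ F : ℝ → ℝ) (μ₀ : Measure ℝ) : Prop :=
  ∫⁻ x, ENNReal.ofReal (1 - v₀ (F x)) ∂μ₀ < ⊤

/-!
Fubini on `{(t, α) | α ≤ F t} = {(t, α) | F⁻¹ α ≤ t}` gives
`∫_{-∞}^x F = ∫_0^1 (x - F⁻¹ α)⁺ dα`.
Splitting the right-hand side at `p ∈ [0,1]` yields
`∫_{-∞}^x F + ∫_0^p F⁻¹ = p x + ∫_0^p (F⁻¹ - x)⁺ + ∫_p^1 (x - F⁻¹)⁺`,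
a Fenchel–Young inequality `p x ≤ ∫_{-∞}^x F + ∫_0^p F⁻¹` that is an equality when
`x = F⁻¹ p` or `p = F x`. Each implication compares the equality case for one cdf with the
inequality for the other; `p = 1` follows by continuity of `p ↦ ∫_0^p F⁻¹`. Finite means make
`F⁻¹` integrable on `(0,1)`, because `F⁻¹` pushes Lebesgue measure on `(0,1)` forward to `dF`.
-/

lemma volume_Ioc_inter_Ioo_zero_one {c d : ℝ} (hc : 0 ≤ c) (hd : d ≤ 1) :
    volume (Ioc c d ∩ Ioo 0 1) = ENNReal.ofReal (d - c) := by
  rw [measure_congr ((ae_eq_refl (Ioc c d)).inter Ioo_ae_eq_Ioc),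
    inter_eq_left.2 (Ioc_subset_Ioc hc hd), Real.volume_Ioc]

lemma volume_Iic_inter_Ioo_zero_one {c : ℝ} (hc : c ≤ 1) :
    volume (Iic c ∩ Ioo 0 1) = ENNReal.ofReal c := by
  rw [measure_congr ((ae_eq_refl (Iic c)).inter Ioo_ae_eq_Ioc), Iic_inter_Ioc_of_le hc,
    Real.volume_Ioc, sub_zero]

lemma continuousOn_integral_Ioo {E : Type*} [NormedAddCommGroup E] [NormedSpace ℝ E]
    {f : ℝ → E} {a b : ℝ} (hf : IntegrableOn f (Ioo a b)) :
    ContinuousOn (fun p => ∫ x in Ioo a p, f x) (Icc a b) := by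
  rcases lt_or_ge b a with hba | hab
  · simp [Icc_eq_empty_of_lt hba]
  have hf' : IntegrableOn f (uIcc a b) := by
    rwa [uIcc_of_le hab, integrableOn_Icc_iff_integrableOn_Ioo]
  have hprim := intervalIntegral.continuousOn_primitive_interval hf'
  rw [uIcc_of_le hab] at hprim
  refine hprim.congr fun p hp => ?_
  dsimp only
  rw [intervalIntegral.integral_of_le hp.1, integral_Ioc_eq_integral_Ioo]

namespace IsCDF

variable {F : ℝ → ℝ} {mF : Measure ℝ}

lemma nonneg (hF : IsCDF F) (x : ℝ) : 0 ≤ F x :=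
  le_of_tendsto hF.tendsto_atBot <| (eventually_le_atBot x).mono fun _ hy => hF.mono hy

lemma le_one (hF : IsCDF F) (x : ℝ) : F x ≤ 1 :=
  ge_of_tendsto hF.tendsto_atTop <| (eventually_ge_atTop x).mono fun _ hy => hF.mono hy

lemma qf_le_iff (hF : IsCDF F) {α : ℝ} (hα : α ∈ Ioo (0:ℝ) 1) {x : ℝ} :
    qf F α ≤ x ↔ α ≤ F x := by
  have hne : {x | α ≤ F x}.Nonempty :=
    (hF.tendsto_atTop.eventually (eventually_ge_nhds hα.2)).exists
  have hbdd : BddBelow {x | α ≤ F x} := by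
    obtain ⟨y, hy⟩ := (hF.tendsto_atBot.eventually (eventually_lt_nhds hα.1)).exists
    exact ⟨y, fun s hs => le_of_not_gt fun hsy => (hs.trans (hF.mono hsy.le)).not_gt hy⟩
  refine ⟨fun h => ?_, fun h => csInf_le hbdd h⟩
  -- `α ≤ F y` for every `y > x`, and `F` is right-continuous at `x`
  refine ge_of_tendsto ((hF.right_cont x).mono Ioi_subset_Ici_self).tendsto ?_
  filter_upwards [self_mem_nhdsWithin] with y hy
  obtain ⟨s, hs, hsy⟩ := exists_lt_of_csInf_lt hne (h.trans_lt hy)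
  exact hs.trans (hF.mono hsy.le)

lemma monotoneOn_qf (hF : IsCDF F) : MonotoneOn (qf F) (Ioo 0 1) := fun _ hα _ hβ hαβ =>
  (hF.qf_le_iff hα).2 (hαβ.trans ((hF.qf_le_iff hβ).1 le_rfl))

lemma aemeasurable_qf (hF : IsCDF F) : AEMeasurable (qf F) (volume.restrict (Ioo 0 1)) :=
  aemeasurable_restrict_of_monotoneOn measurableSet_Ioo hF.monotoneOn_qf

lemma map_qf_volume_restrict_Ioo (hF : IsCDF F) (hmF : IsLSR F mF) :
    (volume.restrict (Ioo 0 1)).map (qf F) = mF := by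
  refine (Measure.ext_of_Ioc' mF _ (fun a b hab => ?_) fun a b hab => ?_).symm
  · rw [hmF a b hab.le]; exact ENNReal.ofReal_ne_top
  have hpre : qf F ⁻¹' Ioc a b ∩ Ioo 0 1 = Ioc (F a) (F b) ∩ Ioo 0 1 := by
    ext α
    simp only [mem_inter_iff, mem_preimage, mem_Ioc, and_congr_left_iff]
    intro hα
    rw [hF.qf_le_iff hα, ← not_le, hF.qf_le_iff hα, not_le]
  rw [hmF a b hab.le, Measure.map_apply_of_aemeasurable hF.aemeasurable_qf measurableSet_Ioc,
    Measure.restrict_apply' measurableSet_Ioo, hpre,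
    volume_Ioc_inter_Ioo_zero_one (hF.nonneg a) (hF.le_one b)]

lemma integrableOn_qf (hF : IsCDF F) (hmF : IsLSR F mF)
    (hmean : ∫⁻ x, ENNReal.ofReal |x| ∂mF < ⊤) : IntegrableOn (qf F) (Ioo 0 1) := by
  have hid : Integrable id mF :=
    ⟨aestronglyMeasurable_id,
      by simpa [HasFiniteIntegral, Real.enorm_eq_ofReal_abs] using hmean⟩
  rw [← hF.map_qf_volume_restrict_Ioo hmF] at hid
  exact hid.comp_aemeasurable hF.aemeasurable_qf

lemma lintegral_Iic_eq_lintegral_qf (hF : IsCDF F) (x : ℝ) :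
    ∫⁻ t in Iic x, ENNReal.ofReal (F t) =
      ∫⁻ α in Ioo 0 1, ENNReal.ofReal (x - qf F α) := by
  set S : Set (ℝ × ℝ) := {p | p.2 ≤ F p.1}
  have hS : MeasurableSet S :=
    measurableSet_le measurable_snd (hF.mono.measurable.comp measurable_fst)
  calc ∫⁻ t in Iic x, ENNReal.ofReal (F t)
      = ∫⁻ t in Iic x, volume.restrict (Ioo 0 1) (Prod.mk t ⁻¹' S) := by
        refine lintegral_congr fun t => ?_
        rw [Measure.restrict_apply' measurableSet_Ioo]
        exact (volume_Iic_inter_Ioo_zero_one (hF.le_one t)).symm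
    _ = ∫⁻ α in Ioo 0 1, volume.restrict (Iic x) ((·, α) ⁻¹' S) := by
        rw [← Measure.prod_apply hS, Measure.prod_apply_symm hS]
    _ = ∫⁻ α in Ioo 0 1, ENNReal.ofReal (x - qf F α) := by
        refine setLIntegral_congr_fun measurableSet_Ioo fun α hα => ?_
        have hslice : (·, α) ⁻¹' S = Ici (qf F α) := by
          ext t
          exact (hF.qf_le_iff hα).symm
        rw [hslice, Measure.restrict_apply' measurableSet_Iic, Ici_inter_Iic, Real.volume_Icc]

lemma integral_Iic_eq_integral_qf (hF : IsCDF F) (x : ℝ) :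
    ∫ t in Iic x, F t = ∫ α in Ioo 0 1, (x - qf F α)⁺ := by
  rw [integral_eq_lintegral_of_nonneg_ae (ae_of_all _ hF.nonneg)
      hF.mono.measurable.aestronglyMeasurable,
    integral_eq_lintegral_of_nonneg_ae (ae_of_all _ fun _ => posPart_nonneg _)
      ((hF.aemeasurable_qf.const_sub x).max aemeasurable_const).aestronglyMeasurable,
    hF.lintegral_Iic_eq_lintegral_qf]
  simp_rw [posPart_def, ENNReal.ofReal_max, ENNReal.ofReal_zero, max_zero]

lemma integral_Iic_add_integral_qf (hF : IsCDF F) (hq : IntegrableOn (qf F) (Ioo 0 1))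
    {p : ℝ} (hp : p ∈ Icc (0:ℝ) 1) (x : ℝ) :
    (∫ t in Iic x, F t) + ∫ α in Ioo 0 p, qf F α =
      p * x + ((∫ α in Ioo 0 p, (qf F α - x)⁺) + ∫ α in Ioo p 1, (x - qf F α)⁺) := by
  have hsub : Ioo 0 p ⊆ Ioo (0:ℝ) 1 := Ioo_subset_Ioo_right hp.2
  have hint : IntegrableOn (fun α => (x - qf F α)⁺) (Ioc 0 1) :=
    (integrableOn_Ioc_iff_integrableOn_Ioo).2
      ((integrableOn_const measure_Ioo_lt_top.ne).sub hq).pos_part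
  have hint' : IntegrableOn (fun α => (qf F α - x)⁺) (Ioo 0 p) :=
    ((hq.mono_set hsub).sub (integrableOn_const measure_Ioo_lt_top.ne)).pos_part
  have hsplit : ∫ α in Ioo 0 1, (x - qf F α)⁺ =
      (∫ α in Ioo 0 p, (x - qf F α)⁺) + ∫ α in Ioo p 1, (x - qf F α)⁺ := by
    rw [← integral_Ioc_eq_integral_Ioo, ← Ioc_union_Ioc_eq_Ioc hp.1 hp.2,
      setIntegral_union (Ioc_disjoint_Ioc_of_le le_rfl) measurableSet_Ioc,
      integral_Ioc_eq_integral_Ioo, integral_Ioc_eq_integral_Ioo]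
    exacts [hint.mono_set (Ioc_subset_Ioc_right hp.2), hint.mono_set (Ioc_subset_Ioc_left hp.1)]
  have hmax : ∀ α, (x - qf F α)⁺ + qf F α = x + (qf F α - x)⁺ := fun α => by
    simp only [posPart_def]
    rcases le_total x (qf F α) with h | h
    · rw [max_eq_right (by linarith), max_eq_left (by linarith)]; ring
    · rw [max_eq_left (by linarith), max_eq_right (by linarith)]; ring
  have hleft : (∫ α in Ioo 0 p, (x - qf F α)⁺) + ∫ α in Ioo 0 p, qf F α =
      p * x + ∫ α in Ioo 0 p, (qf F α - x)⁺ := by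
    rw [← integral_add (hint.mono_set (Ioo_subset_Ioc_self.trans (Ioc_subset_Ioc_right hp.2)))
        (hq.mono_set hsub), integral_congr_ae (ae_of_all _ hmax),
      integral_add (integrableOn_const (C := x) measure_Ioo_lt_top.ne) hint', setIntegral_const,
      Real.volume_real_Ioo_of_le hp.1, sub_zero, smul_eq_mul]
  rw [hF.integral_Iic_eq_integral_qf, hsplit]
  linarith

lemma mul_le_integral_Iic_add_integral_qf (hF : IsCDF F) (hq : IntegrableOn (qf F) (Ioo 0 1))
    {p : ℝ} (hp : p ∈ Icc (0:ℝ) 1) (x : ℝ) :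
    p * x ≤ (∫ t in Iic x, F t) + ∫ α in Ioo 0 p, qf F α := by
  rw [hF.integral_Iic_add_integral_qf hq hp x]
  exact le_add_of_nonneg_right <| add_nonneg
    (setIntegral_nonneg measurableSet_Ioo fun _ _ => posPart_nonneg _)
    (setIntegral_nonneg measurableSet_Ioo fun _ _ => posPart_nonneg _)

lemma integral_Iic_add_integral_qf_eq_mul (hF : IsCDF F) (hq : IntegrableOn (qf F) (Ioo 0 1))
    {p x : ℝ} (hp : p ∈ Icc (0:ℝ) 1) (hlt : ∀ α ∈ Ioo 0 p, qf F α ≤ x)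
    (hgt : ∀ α ∈ Ioo p 1, x ≤ qf F α) :
    (∫ t in Iic x, F t) + ∫ α in Ioo 0 p, qf F α = p * x := by
  rw [hF.integral_Iic_add_integral_qf hq hp x,
    setIntegral_eq_zero_of_forall_eq_zero fun α hα =>
      posPart_eq_zero.2 (sub_nonpos.2 (hlt α hα)),
    setIntegral_eq_zero_of_forall_eq_zero fun α hα =>
      posPart_eq_zero.2 (sub_nonpos.2 (hgt α hα)),
    add_zero, add_zero]

end IsCDF

/-- **SSD ⇔ weak Lorenz ordering.**  Let `F₁, F₂` be cdf's with finite
means.  Then `∫_{-∞}^{x} F₁(t) dt ≥ ∫_{-∞}^{x} F₂(t) dt` for all `x ∈ ℝ` iff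
`∫_0^p F₁⁻¹(α) dα ≤ ∫_0^p F₂⁻¹(α) dα` for all `p ∈ [0,1]` (integrals with respect to
Lebesgue measure). -/
theorem ssd_iff_weak_lorenz
    (F₁ F₂ : ℝ → ℝ) (hF₁ : IsCDF F₁) (hF₂ : IsCDF F₂)
    (mF₁ mF₂ : Measure ℝ) (hmF₁ : IsLSR F₁ mF₁) (hmF₂ : IsLSR F₂ mF₂)
    (hmean₁ : ∫⁻ x, ENNReal.ofReal |x| ∂mF₁ < ⊤)
    (hmean₂ : ∫⁻ x, ENNReal.ofReal |x| ∂mF₂ < ⊤) :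
    (∀ x : ℝ, ∫ t in Iic x, F₂ t ≤ ∫ t in Iic x, F₁ t) ↔
    (∀ p ∈ Icc (0:ℝ) 1,
      ∫ α in Ioo 0 p, qf F₁ α ≤ ∫ α in Ioo 0 p, qf F₂ α) := by
  have hq₁ := hF₁.integrableOn_qf hmF₁ hmean₁
  have hq₂ := hF₂.integrableOn_qf hmF₂ hmean₂
  constructor
  · intro hssd
    have hcl : closure (Ioo (0:ℝ) 1) = Icc 0 1 := closure_Ioo zero_ne_one
    refine hcl ▸ le_on_closure (fun p hp => ?_) (hcl ▸ continuousOn_integral_Ioo hq₁)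
      (hcl ▸ continuousOn_integral_Ioo hq₂)
    have heq := hF₁.integral_Iic_add_integral_qf_eq_mul hq₁ (Ioo_subset_Icc_self hp)
      (fun α hα => hF₁.monotoneOn_qf ⟨hα.1, hα.2.trans hp.2⟩ hp hα.2.le)
      (fun α hα => hF₁.monotoneOn_qf hp ⟨hp.1.trans hα.1, hα.2⟩ hα.1.le)
    linarith [hF₂.mul_le_integral_Iic_add_integral_qf hq₂ (Ioo_subset_Icc_self hp) (qf F₁ p),
      hssd (qf F₁ p)]
  · intro hlor x
    have hp : F₂ x ∈ Icc (0:ℝ) 1 := ⟨hF₂.nonneg x, hF₂.le_one x⟩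
    have heq := hF₂.integral_Iic_add_integral_qf_eq_mul hq₂ hp
      (fun α hα => (hF₂.qf_le_iff ⟨hα.1, hα.2.trans_le hp.2⟩).2 hα.2.le)
      (fun α hα => le_of_not_ge fun h =>
        ((hF₂.qf_le_iff ⟨hp.1.trans_lt hα.1, hα.2⟩).1 h).not_gt hα.1)
    linarith [hF₁.mul_le_integral_Iic_add_integral_qf hq₁ hp x, hlor _ hp]

end
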